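/- arXiv:1308.0228 — 6 statements merged into one kernel-verified Lean document; each statement's English description precedes it below -/
import Mathlib

section
/- For all real numbers q > 1 and q′ > 1, and every 1 ≤ n ≤ 2g: det(E⁺(q) + E⁻(q)·Jₙ) = 0 if and only if det(E⁺(q′) + E⁻(q′)·Jₙ) = 0; det(E⁺(q) − E⁻(q)·Jₙ) = 0 if and only if det(E⁺(q′) − E⁻(q′)·Jₙ) = 0; and if det(E⁺(q) − E⁻(q)·Jₙ) ≠ 0 and det(E⁺(q′) − E⁻(q′)·Jₙ) ≠ 0 then δₙ(c; q) = δₙ(c; q′). Here E⁺(q), E⁻(q) denote the matrices built from the vector C determined by the parameter q. In other words, the quantities δₙ(c; q) are independent of the choice of q. -/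
/-!
Write `L = log q`. Then `E⁺ = T - L • S` and `E⁻ = T + L • S`, where `T` is the lower triangular
band Toeplitz matrix of the `c_k` and `S` is `T` with its entries weighted by `i - j - g`.
For `J = ±Jₙ` we have `J³ = J`, so `B = (J² - J)/2` is the projection onto the `(-1)`-eigenspace
of `J`, and `E⁺ + E⁻ J = T (1 + J) - L S (1 - J)` factors as `K · (1 + (L - 1) B) · U(L)` with `K`
independent of `L`. The middle factor has determinant `L ^ rank B`, and
`U(L) = 1 - L T⁻¹ S (1 - J²)` is lower triangular with diagonal entries `1` and `1 + g L`, the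
same for both signs of `J`. Hence whether the determinants vanish does not depend on `q`, and in
their ratio only a power of `L` survives: the ranks of `B` for `-Jₙ` and for `Jₙ` differ by
`trace Jₙ = n mod 2`, which is exactly compensated by the factor `g log q` for odd `n`.
-/

open Matrix Complex

/-- The `(2g+1) × (2g+1)` matrix `E⁺` with (1-based) `(i,j)` entry `C (i - j - g)`. -/
noncomputable def Ep (g : ℕ) (C : ℤ → ℝ) : Matrix (Fin (2*g+1)) (Fin (2*g+1)) ℝ :=
  fun i j => C (((i : ℕ) : ℤ) - ((j : ℕ) : ℤ) - (g : ℤ))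

/-- The `(2g+1) × (2g+1)` matrix `E⁻` with (1-based) `(i,j)` entry `C (g - i + j)`. -/
noncomputable def Em (g : ℕ) (C : ℤ → ℝ) : Matrix (Fin (2*g+1)) (Fin (2*g+1)) ℝ :=
  fun i j => C ((g : ℤ) - ((i : ℕ) : ℤ) + ((j : ℕ) : ℤ))

/-- The `(2g+1) × (2g+1)` matrix `Jₙ` with (1-based) `(i,j)` entry `1` if `i + j = n + 1`,
`0` otherwise. -/
def Jmat (g : ℕ) (n : ℕ) : Matrix (Fin (2*g+1)) (Fin (2*g+1)) ℝ :=
  fun i j => if (i : ℕ) + (j : ℕ) + 1 = n then 1 else 0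

/-- The self-reciprocal polynomial `P(x) = Σ_{k=0}^{g-1} c_k (x^{2g-k} + x^k) + c_g x^g`,
viewed as a function on `ℂ`. -/
noncomputable def Pfun (g : ℕ) (c : ℕ → ℝ) (x : ℂ) : ℂ :=
  ∑ k ∈ Finset.range g, (c k : ℂ) * (x ^ (2*g - k) + x ^ k) + (c g : ℂ) * x ^ g

/-- The vector `C` determined by `q`: `C(m) = c_{g-m} (1 - m log q)` for `0 ≤ m ≤ g`,
`C(-m) = c_{g-m} (1 + m log q)` for `1 ≤ m ≤ g`, and `C(m) = 0` for `|m| > g`. -/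
noncomputable def Cq (g : ℕ) (c : ℕ → ℝ) (q : ℝ) : ℤ → ℝ := fun m =>
  if m.natAbs ≤ g then c (g - m.natAbs) * (1 - (m : ℝ) * Real.log q) else 0

/-- `δₙ(c; q)`: the ratio `det(E⁺ + E⁻ Jₙ)/det(E⁺ - E⁻ Jₙ)` times `g log q` if `n` is odd,
and the plain ratio if `n` is even. -/
noncomputable def deltaq (g : ℕ) (c : ℕ → ℝ) (q : ℝ) (n : ℕ) : ℝ :=
  ((Ep g (Cq g c q) + Em g (Cq g c q) * Jmat g n).det /
   (Ep g (Cq g c q) - Em g (Cq g c q) * Jmat g n).det) *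
  (if n % 2 = 1 then (g : ℝ) * Real.log q else 1)

namespace Matrix

section Idempotent

variable {K n : Type*} [Field K] [Fintype n] [DecidableEq n]

theorem IsIdempotentElem.isProj_range_toLin' {B : Matrix n n K} (hB : IsIdempotentElem B) :
    LinearMap.IsProj (LinearMap.range (toLin' B)) (toLin' B) :=
  LinearMap.IsIdempotentElem.isProj_range _ (hB.map toLinAlgEquiv')

theorem IsIdempotentElem.rank_eq_trace {B : Matrix n n K} (hB : IsIdempotentElem B) :
    (B.rank : K) = B.trace := by
  rw [← trace_toLin'_eq, hB.isProj_range_toLin'.trace, rank, toLin'_apply']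

theorem IsIdempotentElem.det_one_add_smul {B : Matrix n n K} (hB : IsIdempotentElem B) (t : K) :
    (1 + (t - 1) • B).det = t ^ B.rank := by
  set e := (LinearMap.range (toLin' B)).prodEquivOfIsCompl _ hB.isProj_range_toLin'.isCompl
  have h : toLin' (1 + (t - 1) • B) =
      e.conj (LinearMap.prodMap (t • LinearMap.id) LinearMap.id) := by
    rw [map_add, map_smul, toLin'_one]
    conv_lhs => rw [hB.isProj_range_toLin'.eq_conj_prodMap]
    rw [← LinearEquiv.conj_id e, ← map_smul, ← map_add]
    congr 1
    ext x <;> simp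
    ring
  rw [← LinearMap.det_toLin', h, LinearEquiv.conj_apply, LinearMap.comp_assoc, LinearMap.det_conj,
    LinearMap.det_prodMap, LinearMap.det_smul, LinearMap.det_id, LinearMap.det_id, rank,
    toLin'_apply']
  simp

variable [NeZero (2 : K)]

def negEigenproj (J : Matrix n n K) : Matrix n n K := (2 : K)⁻¹ • (J * J - J)

theorem isIdempotentElem_negEigenproj {J : Matrix n n K} (hJ : J * J * J = J) :
    IsIdempotentElem (negEigenproj J) := by
  have hJ' : J * (J * J) = J := by rw [← Matrix.mul_assoc, hJ]
  unfold IsIdempotentElem negEigenproj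
  simp only [smul_mul_smul_comm, sub_mul, mul_sub, Matrix.mul_assoc, hJ']
  match_scalars <;> field_simp <;> ring

theorem rank_negEigenproj_neg {J : Matrix n n K} (hJ : J * J * J = J) :
    ((negEigenproj (-J)).rank : K) = (negEigenproj J).rank + J.trace := by
  have hJ' : -J * -J * -J = -J := by simp only [neg_mul_neg, Matrix.mul_neg, hJ]
  rw [(isIdempotentElem_negEigenproj hJ').rank_eq_trace,
    (isIdempotentElem_negEigenproj hJ).rank_eq_trace]
  simp only [negEigenproj, neg_mul_neg, trace_smul, trace_sub, trace_neg, smul_eq_mul]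
  field_simp
  ring

theorem sub_smul_add_add_smul_mul_eq {T S J G : Matrix n n K} (hJ : J * J * J = J)
    (hJG : J * G = 0) (hTG : T * G = S * (1 - J * J)) (L : K) :
    T - L • S + (T + L • S) * J =
      (T * (1 + J) - S * (J * J - J)) * (1 + (L - 1) • negEigenproj J) * (1 - L • G) := by
  have hJ' : J * (J * J) = J := by rw [← Matrix.mul_assoc, hJ]
  simp only [negEigenproj, mul_add, add_mul, mul_sub, sub_mul, Matrix.mul_assoc, Matrix.mul_one,
    smul_mul_assoc, mul_smul_comm, smul_add, smul_sub, smul_smul, hJ', hJG, hTG, Matrix.mul_zero,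
    smul_zero]
  match_scalars <;> field_simp <;> ring

end Idempotent

theorem IsLowerTriangular.mul_apply_self {R n : Type*} [CommRing R] [Fintype n] [LinearOrder n]
    {A B : Matrix n n R} (hA : A.IsLowerTriangular) (hB : B.IsLowerTriangular) (i : n) :
    (A * B) i i = A i i * B i i := by
  rw [mul_apply, Finset.sum_eq_single i]
  · intro k _ hk
    rcases lt_or_gt_of_ne hk with h | h
    · rw [hB (by exact h), mul_zero]
    · rw [hA (by exact h), zero_mul]
  · simp

end Matrix

noncomputable def bandCoeff (g : ℕ) (c : ℕ → ℝ) (m : ℤ) : ℝ :=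
  if m.natAbs ≤ g then c (g - m.natAbs) else 0

noncomputable def toeplitzBand (g : ℕ) (c : ℕ → ℝ) :
    Matrix (Fin (2*g+1)) (Fin (2*g+1)) ℝ :=
  Ep g (bandCoeff g c)

noncomputable def weightedBand (g : ℕ) (c : ℕ → ℝ) :
    Matrix (Fin (2*g+1)) (Fin (2*g+1)) ℝ :=
  Ep g (fun m => m * bandCoeff g c m)

noncomputable def bandRatio (g : ℕ) (c : ℕ → ℝ) :
    Matrix (Fin (2*g+1)) (Fin (2*g+1)) ℝ :=
  (toeplitzBand g c)⁻¹ * weightedBand g c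

section Band

variable (g : ℕ) (c : ℕ → ℝ)

theorem Ep_isLowerTriangular {C : ℤ → ℝ} (hC : ∀ m < -(g : ℤ), C m = 0) :
    (Ep g C).IsLowerTriangular := fun i j hij => by
  have : (i : ℕ) < j := hij
  exact hC _ (by omega)

theorem Ep_apply_self (C : ℤ → ℝ) (i : Fin (2*g+1)) : Ep g C i i = C (-g) := by
  simp [Ep]

theorem bandCoeff_of_lt {m : ℤ} (hm : m < -(g : ℤ)) : bandCoeff g c m = 0 := by
  rw [bandCoeff, if_neg (by omega)]

theorem Ep_Cq (q : ℝ) : Ep g (Cq g c q) = toeplitzBand g c - Real.log q • weightedBand g c := by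
  ext i j
  simp only [Ep, Cq, toeplitzBand, weightedBand, bandCoeff, Matrix.sub_apply,
    Matrix.smul_apply, smul_eq_mul]
  split_ifs <;> ring

theorem Em_Cq (q : ℝ) : Em g (Cq g c q) = toeplitzBand g c + Real.log q • weightedBand g c := by
  ext i j
  have h : (g : ℤ) - (i : ℕ) + (j : ℕ) = -((i : ℕ) - (j : ℕ) - g) := by ring
  simp only [Ep, Em, Cq, toeplitzBand, weightedBand, bandCoeff, Matrix.add_apply,
    Matrix.smul_apply, smul_eq_mul, h, Int.natAbs_neg, Int.cast_neg]
  split_ifs <;> ring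

theorem toeplitzBand_isLowerTriangular : (toeplitzBand g c).IsLowerTriangular :=
  Ep_isLowerTriangular g fun _ hm => bandCoeff_of_lt g c hm

theorem weightedBand_isLowerTriangular : (weightedBand g c).IsLowerTriangular :=
  Ep_isLowerTriangular g fun _ hm => by rw [bandCoeff_of_lt g c hm, mul_zero]

theorem toeplitzBand_apply_self (i : Fin (2*g+1)) : toeplitzBand g c i i = c 0 := by
  simp [toeplitzBand, Ep_apply_self, bandCoeff]

theorem weightedBand_apply_self (i : Fin (2*g+1)) : weightedBand g c i i = -g * c 0 := by
  simp [weightedBand, Ep_apply_self, bandCoeff]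

theorem det_toeplitzBand : (toeplitzBand g c).det = c 0 ^ (2*g+1) := by
  simp [det_of_isLowerTriangular _ (toeplitzBand_isLowerTriangular g c), toeplitzBand_apply_self]

variable {c} (hc0 : c 0 ≠ 0)
include hc0

theorem isUnit_det_toeplitzBand : IsUnit (toeplitzBand g c).det := by
  rw [det_toeplitzBand]
  exact (pow_ne_zero _ hc0).isUnit

theorem bandRatio_isLowerTriangular : (bandRatio g c).IsLowerTriangular := by
  have := invertibleOfIsUnitDet _ (isUnit_det_toeplitzBand g hc0)
  exact (blockTriangular_inv_of_blockTriangular (toeplitzBand_isLowerTriangular g c)).mul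
    (weightedBand_isLowerTriangular g c)

theorem bandRatio_apply_self (i : Fin (2*g+1)) : bandRatio g c i i = -g := by
  have := invertibleOfIsUnitDet _ (isUnit_det_toeplitzBand g hc0)
  have hinv := blockTriangular_inv_of_blockTriangular (toeplitzBand_isLowerTriangular g c)
  have h1 : (toeplitzBand g c)⁻¹ i i * c 0 = 1 := by
    rw [← toeplitzBand_apply_self g c i, ← IsLowerTriangular.mul_apply_self hinv
      (toeplitzBand_isLowerTriangular g c), inv_mul_of_invertible, one_apply_eq]
  rw [bandRatio, IsLowerTriangular.mul_apply_self hinv (weightedBand_isLowerTriangular g c),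
    weightedBand_apply_self]
  linear_combination (-(g : ℝ)) * h1

end Band

def tailProj (g n : ℕ) : Matrix (Fin (2*g+1)) (Fin (2*g+1)) ℝ :=
  diagonal fun j => if n ≤ (j : ℕ) then 1 else 0

section Reversal

variable {g n : ℕ}

theorem Jmat_mul_apply (hn : n ≤ 2*g) (A : Matrix (Fin (2*g+1)) (Fin (2*g+1)) ℝ)
    (i j : Fin (2*g+1)) :
    (Jmat g n * A) i j = if h : (i : ℕ) < n then A ⟨n - 1 - i, by omega⟩ j else 0 := by
  rw [mul_apply]
  split_ifs with hi
  · rw [Finset.sum_eq_single ⟨n - 1 - i, by omega⟩ (fun k _ hk => ?_) (by simp)]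
    · rw [Jmat, if_pos (by simp; omega), one_mul]
    · rw [Jmat, if_neg (fun h => hk (Fin.ext (by simp; omega))), zero_mul]
  · exact Finset.sum_eq_zero fun k _ => by rw [Jmat, if_neg (by omega), zero_mul]

theorem Jmat_mul_Jmat (hn : n ≤ 2*g) : Jmat g n * Jmat g n = 1 - tailProj g n := by
  ext i j
  rw [Jmat_mul_apply hn, tailProj, Matrix.sub_apply, one_apply, diagonal_apply]
  simp only [Jmat, Fin.ext_iff]
  split_ifs <;> (try norm_num) <;> omega

theorem tailProj_mul_Jmat : tailProj g n * Jmat g n = 0 := by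
  ext i j
  simp only [tailProj, diagonal_mul, Jmat, Matrix.zero_apply]
  split_ifs <;> simp; omega

theorem Jmat_mul_Jmat_mul_Jmat (hn : n ≤ 2*g) : Jmat g n * Jmat g n * Jmat g n = Jmat g n := by
  rw [Jmat_mul_Jmat hn, Matrix.sub_mul, tailProj_mul_Jmat, Matrix.one_mul, sub_zero]

theorem trace_Jmat (hn : n ≤ 2*g) : (Jmat g n).trace = (n % 2 : ℕ) := by
  rw [trace]
  simp only [diag, Jmat]
  rcases Nat.even_or_odd' n with ⟨m, rfl | rfl⟩
  · simp only [Nat.mul_mod_right, Nat.cast_zero]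
    exact Finset.sum_eq_zero fun i _ => if_neg (by omega)
  · rw [Finset.sum_eq_single ⟨m, by omega⟩
      (fun i _ hi => if_neg fun h => hi (Fin.ext (by simp; omega))) (by simp),
      if_pos (by simp; omega)]
    norm_num [Nat.add_mod]

theorem Jmat_mul_mul_tailProj {G : Matrix (Fin (2*g+1)) (Fin (2*g+1)) ℝ}
    (hG : G.IsLowerTriangular) (hn : n ≤ 2*g) : Jmat g n * (G * tailProj g n) = 0 := by
  ext i j
  simp only [Jmat_mul_apply hn, Matrix.zero_apply, tailProj, mul_diagonal]
  split_ifs with hi hj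
  · rw [hG (show (⟨n - 1 - i, _⟩ : Fin (2*g+1)) < j from Fin.mk_lt_of_lt_val (by omega)),
      zero_mul]
  · rw [mul_zero]
  · rfl

theorem det_one_sub_smul_mul_tailProj_pos {G : Matrix (Fin (2*g+1)) (Fin (2*g+1)) ℝ}
    (hG : G.IsLowerTriangular) (hGd : ∀ i, G i i = -g) {L : ℝ} (hL : 0 ≤ L) :
    0 < (1 - L • (G * tailProj g n)).det := by
  have hGE : (G * tailProj g n).IsLowerTriangular := hG.mul (blockTriangular_diagonal _)
  have hT : (1 - L • (G * tailProj g n)).IsLowerTriangular :=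
    blockTriangular_one.sub fun i j h => by rw [Matrix.smul_apply, hGE h, smul_zero]
  rw [det_of_isLowerTriangular _ hT]
  refine Finset.prod_pos fun i _ => ?_
  simp only [Matrix.sub_apply, one_apply_eq, Matrix.smul_apply, tailProj, mul_diagonal, hGd,
    smul_eq_mul]
  split_ifs <;> nlinarith

end Reversal

noncomputable def pencilFactor (g : ℕ) (c : ℕ → ℝ) (J : Matrix (Fin (2*g+1)) (Fin (2*g+1)) ℝ) :
    Matrix (Fin (2*g+1)) (Fin (2*g+1)) ℝ :=
  toeplitzBand g c * (1 + J) - weightedBand g c * (J * J - J)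

section Pencil

variable {g n : ℕ} {c : ℕ → ℝ} {J : Matrix (Fin (2*g+1)) (Fin (2*g+1)) ℝ}

theorem det_Ep_add_Em_mul (hJ : J = Jmat g n ∨ J = -Jmat g n) (hn : n ≤ 2*g) (hc0 : c 0 ≠ 0)
    (q : ℝ) :
    (Ep g (Cq g c q) + Em g (Cq g c q) * J).det =
      (pencilFactor g c J).det * Real.log q ^ (negEigenproj J).rank *
        (1 - Real.log q • (bandRatio g c * tailProj g n)).det := by
  have hJJ : J * J = 1 - tailProj g n := by
    rcases hJ with rfl | rfl <;> simp only [neg_mul_neg, Jmat_mul_Jmat hn]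
  have hJ3 : J * J * J = J := by
    rcases hJ with rfl | rfl <;> simp only [neg_mul_neg, Matrix.mul_neg, Jmat_mul_Jmat_mul_Jmat hn]
  have hJG : J * (bandRatio g c * tailProj g n) = 0 := by
    rcases hJ with rfl | rfl <;>
      simp only [Matrix.neg_mul, Jmat_mul_mul_tailProj (bandRatio_isLowerTriangular g hc0) hn,
        neg_zero]
  have hTG : toeplitzBand g c * (bandRatio g c * tailProj g n) =
      weightedBand g c * (1 - J * J) := by
    rw [hJJ, sub_sub_cancel, bandRatio, ← Matrix.mul_assoc, ← Matrix.mul_assoc,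
      mul_nonsing_inv _ (isUnit_det_toeplitzBand g hc0), Matrix.one_mul]
  rw [Ep_Cq, Em_Cq, sub_smul_add_add_smul_mul_eq hJ3 hJG hTG, det_mul, det_mul,
    (isIdempotentElem_negEigenproj hJ3).det_one_add_smul, pencilFactor]

theorem det_Ep_add_Em_mul_eq_zero_iff (hJ : J = Jmat g n ∨ J = -Jmat g n) (hn : n ≤ 2*g)
    (hc0 : c 0 ≠ 0) {q : ℝ} (hq : 1 < q) :
    (Ep g (Cq g c q) + Em g (Cq g c q) * J).det = 0 ↔ (pencilFactor g c J).det = 0 := by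
  have hL := Real.log_pos hq
  have hU := det_one_sub_smul_mul_tailProj_pos (n := n) (bandRatio_isLowerTriangular g hc0)
    (bandRatio_apply_self g hc0) hL.le
  rw [det_Ep_add_Em_mul hJ hn hc0]
  simp [hL.ne', hU.ne']

theorem deltaq_eq (hn : n ≤ 2*g) (hc0 : c 0 ≠ 0) {q : ℝ} (hq : 1 < q)
    (h : (Ep g (Cq g c q) - Em g (Cq g c q) * Jmat g n).det ≠ 0) :
    deltaq g c q n = (pencilFactor g c (Jmat g n)).det / (pencilFactor g c (-Jmat g n)).det *
      (if n % 2 = 1 then (g : ℝ) else 1) := by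
  have hL := Real.log_pos hq
  have hU := det_one_sub_smul_mul_tailProj_pos (n := n) (bandRatio_isLowerTriangular g hc0)
    (bandRatio_apply_self g hc0) hL.le
  have hrank : (negEigenproj (-Jmat g n)).rank = (negEigenproj (Jmat g n)).rank + n % 2 := by
    have h := rank_negEigenproj_neg (Jmat_mul_Jmat_mul_Jmat hn)
    rw [trace_Jmat hn] at h
    exact_mod_cast h
  rw [sub_eq_add_neg, ← Matrix.mul_neg, det_Ep_add_Em_mul (Or.inr rfl) hn hc0, hrank] at h
  rw [deltaq, sub_eq_add_neg, ← Matrix.mul_neg, det_Ep_add_Em_mul (Or.inl rfl) hn hc0,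
    det_Ep_add_Em_mul (Or.inr rfl) hn hc0, hrank]
  have hκ : (pencilFactor g c (-Jmat g n)).det ≠ 0 := by
    rintro h0; simp [h0] at h
  rcases Nat.mod_two_eq_zero_or_one n with h2 | h2 <;> simp [h2, pow_succ] <;> field_simp

end Pencil

theorem stmt6_general (g : ℕ) (c : ℕ → ℝ) (hc0 : c 0 ≠ 0)
    (q q' : ℝ) (hq : 1 < q) (hq' : 1 < q') :
    ∀ n : ℕ, 1 ≤ n → n ≤ 2*g →
      ((Ep g (Cq g c q) + Em g (Cq g c q) * Jmat g n).det = 0 ↔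
        (Ep g (Cq g c q') + Em g (Cq g c q') * Jmat g n).det = 0) ∧
      ((Ep g (Cq g c q) - Em g (Cq g c q) * Jmat g n).det = 0 ↔
        (Ep g (Cq g c q') - Em g (Cq g c q') * Jmat g n).det = 0) ∧
      ((Ep g (Cq g c q) - Em g (Cq g c q) * Jmat g n).det ≠ 0 →
        (Ep g (Cq g c q') - Em g (Cq g c q') * Jmat g n).det ≠ 0 →
        deltaq g c q n = deltaq g c q' n) := by
  intro n _ hn
  refine ⟨?_, ?_, fun h h' => by rw [deltaq_eq hn hc0 hq h, deltaq_eq hn hc0 hq' h']⟩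
  · rw [det_Ep_add_Em_mul_eq_zero_iff (Or.inl rfl) hn hc0 hq,
      det_Ep_add_Em_mul_eq_zero_iff (Or.inl rfl) hn hc0 hq']
  · simp only [sub_eq_add_neg, ← Matrix.mul_neg]
    rw [det_Ep_add_Em_mul_eq_zero_iff (Or.inr rfl) hn hc0 hq,
      det_Ep_add_Em_mul_eq_zero_iff (Or.inr rfl) hn hc0 hq']

theorem stmt6 (g : ℕ) (hg : 1 ≤ g) (c : ℕ → ℝ) (hc0 : c 0 ≠ 0)
    (q q' : ℝ) (hq : 1 < q) (hq' : 1 < q') :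
    ∀ n : ℕ, 1 ≤ n → n ≤ 2*g →
      ((Ep g (Cq g c q) + Em g (Cq g c q) * Jmat g n).det = 0 ↔
        (Ep g (Cq g c q') + Em g (Cq g c q') * Jmat g n).det = 0) ∧
      ((Ep g (Cq g c q) - Em g (Cq g c q) * Jmat g n).det = 0 ↔
        (Ep g (Cq g c q') - Em g (Cq g c q') * Jmat g n).det = 0) ∧
      ((Ep g (Cq g c q) - Em g (Cq g c q) * Jmat g n).det ≠ 0 →
        (Ep g (Cq g c q') - Em g (Cq g c q') * Jmat g n).det ≠ 0 →
        deltaq g c q n = deltaq g c q' n) :=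
  stmt6_general g c hc0 q q' hq hq'
end

section
/- Let A_q(z) = exp(−i·g·z·log q)·P(exp(i·z·log q)), B_q(z) = −A_q′(z), and E_q = A_q − i·B_q. Then E_q belongs to the Hermite–Biehler class if and only if every zero of A_q is real and simple (i.e., A_q(ρ) = 0 implies ρ ∈ ℝ and A_q′(ρ) ≠ 0). -/
open Complex

/-- `A_q(z) = exp(-i g z log q) · P(exp(i z log q))`. -/
noncomputable def Aq (g : ℕ) (c : ℕ → ℝ) (q : ℝ) (z : ℂ) : ℂ :=
  Complex.exp (-(Complex.I * (g : ℂ) * z * (Real.log q : ℂ))) *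
    Pfun g c (Complex.exp (Complex.I * z * (Real.log q : ℂ)))

/-- `B_q(z) = -A_q'(z)`. -/
noncomputable def Bq (g : ℕ) (c : ℕ → ℝ) (q : ℝ) (z : ℂ) : ℂ :=
  -(deriv (Aq g c q) z)

/-- An entire function `F` belongs to the Hermite–Biehler class if `|F♯(z)| < |F(z)|`
for every `z` in the open upper half-plane, where `F♯(z) = conj (F (conj z))`, and `F`
has no zeros on the real axis. -/
def HermiteBiehler (F : ℂ → ℂ) : Prop :=
  Differentiable ℂ F ∧
  (∀ z : ℂ, 0 < z.im →
    ‖(starRingEnd ℂ) (F ((starRingEnd ℂ) z))‖ < ‖F z‖) ∧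
  ∀ x : ℝ, F (x : ℂ) ≠ 0

/-!
Write `E = A + i A'` (`B = -A'`). Because `A` is real on the real axis, so is `A'`, hence
`E♯ = A - i A'`. A non-real zero of `A` (or its conjugate) gives `|E♯| = |E|` there, and a multiple
real zero is a real zero of `E`. Conversely, off the zeros of `A` we have
`E♯ / E = (1 - v) / (1 + v)` with `v = i A'/A`, so it suffices that `Im (A'/A) < 0` in the upper
half-plane. With `w = exp (i z log q)` one has `A'/A = i log q (w P'(w)/P(w) - g)`. If all zeros of
`A` are real, every root of `P` lies on the unit circle, and for `|w| < 1` each term of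
`w P'(w)/P(w) = Σ_r w/(w - r)` has real part `< 1/2`; as `deg P ≤ 2g`, `Re (w P'(w)/P(w)) < g`.
-/

open Polynomial ComplexConjugate

lemma re_div_sub_lt_half {w r : ℂ} (hw : ‖w‖ < 1) (hr : ‖r‖ = 1) :
    (w / (w - r)).re < 1 / 2 := by
  have hw2 : w.re ^ 2 + w.im ^ 2 < 1 := by
    have := Complex.sq_norm w
    rw [Complex.normSq_apply] at this
    nlinarith [norm_nonneg w]
  have hr2 : r.re ^ 2 + r.im ^ 2 = 1 := by
    have := Complex.sq_norm r
    rw [Complex.normSq_apply, hr] at this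
    nlinarith
  have hpos : 0 < normSq (w - r) :=
    normSq_pos.mpr (sub_ne_zero.mpr fun h => by rw [h, hr] at hw; exact hw.false)
  rw [div_re, ← add_div, div_lt_iff₀ hpos]
  simp only [sub_re, sub_im, normSq_apply] at *
  nlinarith

theorem re_mul_eval_derivative_div_eval_lt {p : ℂ[X]} {n : ℕ} (hn : 0 < n)
    (hp : p.natDegree ≤ n) (hroots : ∀ r ∈ p.roots, ‖r‖ = 1) {w : ℂ} (hw : ‖w‖ < 1) :
    (w * p.derivative.eval w / p.eval w).re < n / 2 := by
  by_cases hpw : p.eval w = 0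
  · simp [hpw, hn]
  have hsum : w * p.derivative.eval w / p.eval w = (p.roots.map fun r => w / (w - r)).sum := by
    rw [mul_div_assoc, (IsAlgClosed.splits p).eval_derivative_div_eval_of_ne_zero hpw,
      ← Multiset.sum_map_mul_left]
    simp only [mul_one_div]
  have hcard : (Multiset.card p.roots : ℝ) ≤ n := by exact_mod_cast (card_roots' p).trans hp
  rw [hsum, ← coe_reAddGroupHom, map_multiset_sum, Multiset.map_map]
  rcases eq_or_ne p.roots 0 with h0 | hne
  · simp [h0, hn]
  calc (p.roots.map (reAddGroupHom ∘ fun r => w / (w - r))).sum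
      < (p.roots.map fun _ => (1 / 2 : ℝ)).sum :=
        Multiset.sum_lt_sum_of_nonempty hne fun r hr => re_div_sub_lt_half hw (hroots r hr)
    _ ≤ n / 2 := by
        rw [Multiset.map_const', Multiset.sum_replicate, nsmul_eq_mul]
        linarith

section RealEntire

variable {A : ℂ → ℂ}

lemma conj_deriv_conj_of_conj_conj (hA : ∀ z, conj (A (conj z)) = A z) (z : ℂ) :
    conj (deriv A (conj z)) = deriv A z := by
  have hA' : conj ∘ A ∘ conj = A := funext hA
  simpa [hA'] using (congrFun (deriv_conj_conj (f := A)) z).symm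

lemma conj_add_I_mul_deriv_conj (hA : ∀ z, conj (A (conj z)) = A z) (z : ℂ) :
    conj (A (conj z) + I * deriv A (conj z)) = A z - I * deriv A z := by
  rw [map_add, map_mul, conj_I, hA, conj_deriv_conj_of_conj_conj hA]
  ring

lemma norm_one_sub_lt_norm_one_add {u : ℂ} (hu : 0 < u.re) : ‖1 - u‖ < ‖1 + u‖ := by
  rw [← sq_lt_sq₀ (norm_nonneg _) (norm_nonneg _), Complex.sq_norm, Complex.sq_norm,
    normSq_apply, normSq_apply]
  simp only [sub_re, add_re, sub_im, add_im, one_re, one_im]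
  nlinarith

theorem zeros_real_and_simple_of_hermiteBiehler (hA : ∀ z, conj (A (conj z)) = A z)
    (hE : HermiteBiehler fun z => A z + I * deriv A z) (ρ : ℂ) (hρ : A ρ = 0) :
    ρ.im = 0 ∧ deriv A ρ ≠ 0 := by
  obtain ⟨-, hlt, hreal⟩ := hE
  dsimp only at hlt hreal
  have hupper : ∀ σ : ℂ, 0 < σ.im → A σ ≠ 0 := by
    intro σ hσ hAσ
    have h := hlt σ hσ
    simp only [conj_add_I_mul_deriv_conj hA, hAσ, zero_sub, zero_add, norm_neg] at h
    exact h.false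
  have him : ρ.im = 0 := by
    rcases lt_trichotomy ρ.im 0 with h | h | h
    · refine absurd ?_ (hupper (conj ρ) (by simpa using h))
      rw [← hA (conj ρ), conj_conj, hρ, map_zero]
    · exact h
    · exact absurd hρ (hupper ρ h)
  refine ⟨him, fun hd => hreal ρ.re ?_⟩
  rw [show ((ρ.re : ℝ) : ℂ) = ρ from ext rfl (by simp [him]), hρ, hd]
  ring

theorem hermiteBiehler_of_zeros_real_and_simple (hdiff : Differentiable ℂ A)
    (hA : ∀ z, conj (A (conj z)) = A z)
    (hlog : ∀ z, 0 < z.im → A z ≠ 0 → (deriv A z / A z).im < 0)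
    (hzeros : ∀ ρ, A ρ = 0 → ρ.im = 0 ∧ deriv A ρ ≠ 0) :
    HermiteBiehler fun z => A z + I * deriv A z := by
  refine ⟨hdiff.add (hdiff.deriv.const_mul I), fun z hz => ?_, fun x hx => ?_⟩
  · dsimp only
    have hAz : A z ≠ 0 := fun h => hz.ne' (hzeros z h).1
    have hminus : A z - I * deriv A z = A z * (1 - I * (deriv A z / A z)) := by field_simp
    have hplus : A z + I * deriv A z = A z * (1 + I * (deriv A z / A z)) := by field_simp
    have hv : 0 < (I * (deriv A z / A z)).re := by simpa using hlog z hz hAz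
    simp only [conj_add_I_mul_deriv_conj hA, hminus, hplus, norm_mul]
    exact mul_lt_mul_of_pos_left (norm_one_sub_lt_norm_one_add hv) (norm_pos_iff.mpr hAz)
  · dsimp only at hx
    have hx' : A x - I * deriv A x = 0 := by
      rw [← conj_add_I_mul_deriv_conj hA, conj_ofReal, hx, map_zero]
    refine (hzeros x ?_).2 ?_
    · linear_combination (hx + hx') / 2
    · linear_combination (-I / 2) * (hx - hx') + deriv A x * I_sq

end RealEntire

noncomputable def Ppoly (g : ℕ) (c : ℕ → ℝ) : ℂ[X] :=
  ∑ k ∈ Finset.range g, C (c k : ℂ) * (X ^ (2 * g - k) + X ^ k) + C (c g : ℂ) * X ^ g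

section Aq

variable (g : ℕ) (c : ℕ → ℝ) (q : ℝ)

lemma Pfun_eq_eval (x : ℂ) : Pfun g c x = (Ppoly g c).eval x := by
  simp [Pfun, Ppoly, eval_finsetSum]

lemma Pfun_zero : Pfun g c 0 = c 0 := by
  rcases g with _ | n
  · simp [Pfun]
  · rw [Pfun, Finset.sum_range_succ', Finset.sum_eq_zero fun k hk => ?_]
    · simp
    · rw [Finset.mem_range] at hk
      simp [zero_pow (by omega : 2 * (n + 1) - (k + 1) ≠ 0)]

lemma natDegree_Ppoly_le : (Ppoly g c).natDegree ≤ 2 * g := by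
  unfold Ppoly
  refine natDegree_add_le_of_degree_le (natDegree_sum_le_of_forall_le _ _ fun k hk => ?_) ?_
  · have hk : k < g := Finset.mem_range.mp hk
    refine (natDegree_C_mul_le _ _).trans (natDegree_add_le_of_degree_le ?_ ?_) <;>
      rw [natDegree_X_pow] <;> omega
  · exact (natDegree_C_mul_le _ _).trans (by rw [natDegree_X_pow]; omega)

lemma exp_neg_mul_pow_add_pow (θ : ℂ) {k : ℕ} (hk : k ≤ g) :
    exp (-(I * g * θ)) * (exp (I * θ) ^ (2 * g - k) + exp (I * θ) ^ k) =
      2 * cos ((g - k : ℂ) * θ) := by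
  rw [two_cos, mul_add, ← exp_nat_mul, ← exp_nat_mul, ← exp_add, ← exp_add,
    Nat.cast_sub (by omega : k ≤ 2 * g)]
  push_cast
  congr 2 <;> ring

lemma Aq_eq_sum_cos (z : ℂ) :
    Aq g c q z = ∑ k ∈ Finset.range g, c k * (2 * cos ((g - k : ℂ) * (z * Real.log q))) + c g := by
  rw [Aq, Pfun, show -(I * g * z * Real.log q) = -(I * g * (z * Real.log q)) by ring,
    show I * z * Real.log q = I * (z * Real.log q) by ring]
  generalize (z * Real.log q : ℂ) = θ
  rw [mul_add, Finset.mul_sum]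
  congr 1
  · refine Finset.sum_congr rfl fun k hk => ?_
    rw [mul_left_comm, exp_neg_mul_pow_add_pow g θ (Finset.mem_range.mp hk).le]
  · rw [mul_left_comm, ← exp_nat_mul, ← exp_add, show -(I * g * θ) + g * (I * θ) = 0 by ring,
      exp_zero, mul_one]

lemma conj_Aq_conj (z : ℂ) : conj (Aq g c q (conj z)) = Aq g c q z := by
  simp [Aq_eq_sum_cos, map_sum, ← cos_conj, map_ofNat]

lemma hasDerivAt_Aq (z : ℂ) :
    HasDerivAt (Aq g c q)
      (I * Real.log q * exp (-(I * g * z * Real.log q)) *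
        (exp (I * z * Real.log q) * (Ppoly g c).derivative.eval (exp (I * z * Real.log q)) -
          g * (Ppoly g c).eval (exp (I * z * Real.log q)))) z := by
  have hA : Aq g c q = fun z => exp (z * -(I * g * Real.log q)) *
      (Ppoly g c).eval (exp (z * (I * Real.log q))) := funext fun z => by
    rw [Aq, Pfun_eq_eval]; ring_nf
  rw [hA]
  refine ((hasDerivAt_mul_const _).cexp.mul
    (((Ppoly g c).hasDerivAt _).comp z (hasDerivAt_mul_const _).cexp)).congr_deriv ?_
  simp only [Function.comp_apply]
  ring_nf

lemma differentiable_Aq : Differentiable ℂ (Aq g c q) :=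
  fun z => (hasDerivAt_Aq g c q z).differentiableAt

lemma norm_exp_I_mul_mul_ofReal (z : ℂ) (t : ℝ) : ‖exp (I * z * t)‖ = Real.exp (-(z.im * t)) := by
  rw [norm_exp]
  congr 1
  simp [mul_re, mul_im]

lemma norm_eq_one_of_mem_roots_Ppoly (hq : 1 < q) (hc0 : c 0 ≠ 0)
    (hreal : ∀ ρ, Aq g c q ρ = 0 → ρ.im = 0) {r : ℂ} (hr : r ∈ (Ppoly g c).roots) : ‖r‖ = 1 := by
  have hL : (Real.log q : ℂ) ≠ 0 := ofReal_ne_zero.mpr (Real.log_pos hq).ne'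
  have hr0 : r ≠ 0 := by
    rintro rfl
    have h := (isRoot_of_mem_roots hr).eq_zero
    rw [← Pfun_eq_eval, Pfun_zero] at h
    exact hc0 (ofReal_eq_zero.mp h)
  set z := log r / (I * Real.log q)
  have hexp : exp (I * z * Real.log q) = r := by
    rw [show I * z * Real.log q = log r by simp only [z]; field_simp, exp_log hr0]
  have hz : z.im = 0 :=
    hreal z (by rw [Aq, Pfun_eq_eval, hexp, (isRoot_of_mem_roots hr).eq_zero, mul_zero])
  rw [← hexp, norm_exp_I_mul_mul_ofReal, hz, zero_mul, neg_zero, Real.exp_zero]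

lemma im_deriv_Aq_div_Aq_neg (hg : 1 ≤ g) (hq : 1 < q) (hc0 : c 0 ≠ 0)
    (hreal : ∀ ρ, Aq g c q ρ = 0 → ρ.im = 0) {z : ℂ} (hz : 0 < z.im) (hAz : Aq g c q z ≠ 0) :
    (deriv (Aq g c q) z / Aq g c q z).im < 0 := by
  have hL : 0 < Real.log q := Real.log_pos hq
  set w := exp (I * z * Real.log q) with hw_def
  have hw : ‖w‖ < 1 := by
    rw [norm_exp_I_mul_mul_ofReal, Real.exp_lt_one_iff, neg_lt_zero]
    positivity
  have hPw : (Ppoly g c).eval w ≠ 0 := by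
    intro h
    exact hAz (by rw [Aq, Pfun_eq_eval, h, mul_zero])
  have hratio : deriv (Aq g c q) z / Aq g c q z =
      I * Real.log q * (w * (Ppoly g c).derivative.eval w / (Ppoly g c).eval w - g) := by
    rw [(hasDerivAt_Aq g c q z).deriv, Aq, Pfun_eq_eval, ← hw_def]
    field_simp
  have hre := re_mul_eval_derivative_div_eval_lt (by omega : 0 < 2 * g)
    (natDegree_Ppoly_le g c) (fun r hr => norm_eq_one_of_mem_roots_Ppoly g c q hq hc0 hreal hr) hw
  rw [hratio, show ∀ u : ℂ, (I * Real.log q * u).im = Real.log q * u.re from fun u => by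
    simp [mul_im, mul_re], sub_re, natCast_re]
  push_cast at hre
  exact mul_neg_of_pos_of_neg hL (by linarith)

end Aq

theorem stmt10 (g : ℕ) (hg : 1 ≤ g) (q : ℝ) (hq : 1 < q) (c : ℕ → ℝ) (hc0 : c 0 ≠ 0) :
    HermiteBiehler (fun z => Aq g c q z - Complex.I * Bq g c q z) ↔
    (∀ ρ : ℂ, Aq g c q ρ = 0 → ρ.im = 0 ∧ deriv (Aq g c q) ρ ≠ 0) := by
  have hE : (fun z => Aq g c q z - I * Bq g c q z) =
      fun z => Aq g c q z + I * deriv (Aq g c q) z :=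
    funext fun z => by rw [Bq, mul_neg, sub_neg_eq_add]
  rw [hE]
  exact ⟨zeros_real_and_simple_of_hermiteBiehler (conj_Aq_conj g c q),
    fun h => hermiteBiehler_of_zeros_real_and_simple (differentiable_Aq g c q) (conj_Aq_conj g c q)
      (fun z hz => im_deriv_Aq_div_Aq_neg g c q hg hq hc0 (fun ρ hρ => (h ρ hρ).1) hz) h⟩
end

section
/- Let z, w ∈ ℂ with z ≠ conj(w), and suppose (A(·,z), B(·,z)) and (A(·,w), B(·,w)) are solutions of the first-order system on [a₁, a₀]. Define K(a) = ( conj(A(a,w))·B(a,z) − conj(B(a,w))·A(a,z) ) / ( π·(z − conj(w)) ). Then K(a₁) − K(a₀) = (1/π)·∫_{a₁}^{a₀} conj(A(a,w))·A(a,z)·γ(a)^{−1}·a^{−1} da + (1/π)·∫_{a₁}^{a₀} conj(B(a,w))·B(a,z)·γ(a)·a^{−1} da. -/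
/-!
Write `F = conj(A_w)·B_z − conj(B_w)·A_z`. Since `γ` and `a` are real, conjugating the system
for `w` turns `w` into `conj w`, and differentiating `F` the cross terms combine into
`a·F' = (conj w − z)·(conj(A_w)·A_z·γ⁻¹ + conj(B_w)·B_z·γ)`. Integrating this off the finite
exceptional sets (the fundamental theorem of calculus only needs continuity of `F` and
integrability of `F'`) and dividing by `π·(z − conj w)` gives the identity.
-/

open Complex MeasureTheory

/-- A pair `(A, B)` of functions on `[a₁, a₀]` is a solution of the first-order system with
parameter `ζ` if both are continuous on `[a₁, a₀]` and, outside a finite subset `S` of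
`(a₁, a₀)`, both are differentiable with `a·A'(a) = ζ·γ(a)·B(a)` and
`a·B'(a) = -ζ·γ(a)⁻¹·A(a)`. -/
def IsSolution (a₁ a₀ : ℝ) (γ : ℝ → ℝ) (ζ : ℂ) (A B : ℝ → ℂ) : Prop :=
  ContinuousOn A (Set.Icc a₁ a₀) ∧ ContinuousOn B (Set.Icc a₁ a₀) ∧
  ∃ S : Set ℝ, S.Finite ∧ S ⊆ Set.Ioo a₁ a₀ ∧
    ∀ a ∈ Set.Ioo a₁ a₀ \ S,
      HasDerivAt A (ζ * (γ a : ℂ) * B a / (a : ℂ)) a ∧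
      HasDerivAt B (-(ζ * ((γ a : ℂ))⁻¹ * A a / (a : ℂ))) a

theorem IntervalIntegrable.ofReal {𝕜 : Type*} [RCLike 𝕜] {f : ℝ → ℝ} {a b : ℝ} {μ : Measure ℝ}
    (hf : IntervalIntegrable f μ a b) : IntervalIntegrable (fun x => (f x : 𝕜)) μ a b :=
  ⟨hf.1.ofReal, hf.2.ofReal⟩

/-- `π·(z − conj w)·K(a)` in the notation of the statement. -/
def conjWronskian (Aw Bw Az Bz : ℝ → ℂ) (a : ℝ) : ℂ :=
  (starRingEnd ℂ) (Aw a) * Bz a - (starRingEnd ℂ) (Bw a) * Az a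

section

variable {γ : ℝ → ℝ} {z w : ℂ} {Az Bz Aw Bw : ℝ → ℂ}

theorem hasDerivAt_conjWronskian {x : ℝ}
    (hAz : HasDerivAt Az (z * (γ x : ℂ) * Bz x / (x : ℂ)) x)
    (hBz : HasDerivAt Bz (-(z * ((γ x : ℂ))⁻¹ * Az x / (x : ℂ))) x)
    (hAw : HasDerivAt Aw (w * (γ x : ℂ) * Bw x / (x : ℂ)) x)
    (hBw : HasDerivAt Bw (-(w * ((γ x : ℂ))⁻¹ * Aw x / (x : ℂ))) x) :
    HasDerivAt (conjWronskian Aw Bw Az Bz)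
      (((starRingEnd ℂ) w - z) *
        ((starRingEnd ℂ) (Aw x) * Az x * ((γ x : ℂ))⁻¹ * ((x : ℂ))⁻¹ +
          (starRingEnd ℂ) (Bw x) * Bz x * (γ x : ℂ) * ((x : ℂ))⁻¹)) x := by
  refine ((hAw.star.mul hBz).sub (hBw.star.mul hAz)).congr_deriv ?_
  simp only [RCLike.star_def, map_mul, map_div₀, map_neg, map_inv₀, conj_ofReal]
  ring

variable {a₁ a₀ : ℝ}

theorem intervalIntegrable_mul_ofReal_mul_inv {f : ℝ → ℂ} {g : ℝ → ℝ} (ha₁ : 0 < a₁)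
    (ha : a₁ ≤ a₀) (hf : ContinuousOn f (Set.Icc a₁ a₀)) (hg : IntervalIntegrable g volume a₁ a₀) :
    IntervalIntegrable (fun a => f a * (g a : ℂ) * ((a : ℂ))⁻¹) volume a₁ a₀ := by
  rw [← Set.uIcc_of_le ha] at hf
  have hinv : ContinuousOn (fun a : ℝ => ((a : ℂ))⁻¹) (Set.uIcc a₁ a₀) := by
    refine Complex.continuous_ofReal.continuousOn.inv₀ fun x hx => ?_
    rw [Set.uIcc_of_le ha] at hx
    exact_mod_cast (ha₁.trans_le hx.1).ne'
  exact (hg.ofReal.continuousOn_mul hf).mul_continuousOn hinv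

theorem IsSolution.continuousOn_conjWronskian (hz : IsSolution a₁ a₀ γ z Az Bz)
    (hw : IsSolution a₁ a₀ γ w Aw Bw) :
    ContinuousOn (conjWronskian Aw Bw Az Bz) (Set.Icc a₁ a₀) :=
  ((continuous_conj.comp_continuousOn hw.1).mul hz.2.1).sub
    ((continuous_conj.comp_continuousOn hw.2.1).mul hz.1)

theorem IsSolution.conjWronskian_sub_eq_integral (ha₁ : 0 < a₁) (ha : a₁ ≤ a₀)
    (hγint : IntervalIntegrable γ volume a₁ a₀)
    (hγinvint : IntervalIntegrable (fun a => (γ a)⁻¹) volume a₁ a₀)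
    (hz : IsSolution a₁ a₀ γ z Az Bz) (hw : IsSolution a₁ a₀ γ w Aw Bw) :
    conjWronskian Aw Bw Az Bz a₁ - conjWronskian Aw Bw Az Bz a₀ =
      (z - (starRingEnd ℂ) w) *
        ((∫ a in a₁..a₀, (starRingEnd ℂ) (Aw a) * Az a * ((γ a : ℂ))⁻¹ * ((a : ℂ))⁻¹) +
          ∫ a in a₁..a₀, (starRingEnd ℂ) (Bw a) * Bz a * (γ a : ℂ) * ((a : ℂ))⁻¹) := by
  obtain ⟨Sz, hSz, -, hderz⟩ := hz.2.2
  obtain ⟨Sw, hSw, -, hderw⟩ := hw.2.2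
  have hint₁ := intervalIntegrable_mul_ofReal_mul_inv (f := fun a => (starRingEnd ℂ) (Aw a) * Az a)
    ha₁ ha ((continuous_conj.comp_continuousOn hw.1).mul hz.1) hγinvint
  have hint₂ := intervalIntegrable_mul_ofReal_mul_inv (f := fun a => (starRingEnd ℂ) (Bw a) * Bz a)
    ha₁ ha ((continuous_conj.comp_continuousOn hw.2.1).mul hz.2.1) hγint
  simp only [Complex.ofReal_inv] at hint₁
  have hftc := integral_eq_of_hasDerivAt_off_countable_of_le _ _ ha (hSz.union hSw).countable
    (hz.continuousOn_conjWronskian hw)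
    (fun x ⟨hx, hxS⟩ =>
      have ⟨hAz, hBz⟩ := hderz x ⟨hx, fun h => hxS (Or.inl h)⟩
      have ⟨hAw, hBw⟩ := hderw x ⟨hx, fun h => hxS (Or.inr h)⟩
      hasDerivAt_conjWronskian hAz hBz hAw hBw)
    ((hint₁.add hint₂).const_mul ((starRingEnd ℂ) w - z))
  rw [intervalIntegral.integral_const_mul, intervalIntegral.integral_add hint₁ hint₂] at hftc
  linear_combination hftc

end

theorem stmt12_general (a₁ a₀ : ℝ) (ha₁ : 0 < a₁) (ha : a₁ < a₀) (γ : ℝ → ℝ)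
    (hγint : IntervalIntegrable γ volume a₁ a₀)
    (hγinvint : IntervalIntegrable (fun a => (γ a)⁻¹) volume a₁ a₀)
    (z w : ℂ) (hzw : z ≠ (starRingEnd ℂ) w)
    (Az Bz Aw Bw : ℝ → ℂ)
    (hz : IsSolution a₁ a₀ γ z Az Bz) (hw : IsSolution a₁ a₀ γ w Aw Bw) :
    ((starRingEnd ℂ) (Aw a₁) * Bz a₁ - (starRingEnd ℂ) (Bw a₁) * Az a₁) /
        ((Real.pi : ℂ) * (z - (starRingEnd ℂ) w)) -
      ((starRingEnd ℂ) (Aw a₀) * Bz a₀ - (starRingEnd ℂ) (Bw a₀) * Az a₀) /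
        ((Real.pi : ℂ) * (z - (starRingEnd ℂ) w)) =
    (1 / (Real.pi : ℂ)) *
        (∫ a in a₁..a₀, (starRingEnd ℂ) (Aw a) * Az a * ((γ a : ℂ))⁻¹ * ((a : ℂ))⁻¹) +
      (1 / (Real.pi : ℂ)) *
        (∫ a in a₁..a₀, (starRingEnd ℂ) (Bw a) * Bz a * (γ a : ℂ) * ((a : ℂ))⁻¹) := by
  have hπ : (Real.pi : ℂ) ≠ 0 := ofReal_ne_zero.mpr Real.pi_ne_zero
  have hzw' : z - (starRingEnd ℂ) w ≠ 0 := sub_ne_zero.mpr hzw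
  have key := hz.conjWronskian_sub_eq_integral ha₁ ha.le hγint hγinvint hw
  unfold conjWronskian at key
  rw [div_sub_div_same, key]
  field_simp

theorem stmt12 (a₁ a₀ : ℝ) (ha₁ : 0 < a₁) (ha : a₁ < a₀) (γ : ℝ → ℝ)
    (hγne : ∀ a ∈ Set.Icc a₁ a₀, γ a ≠ 0)
    (hγint : IntervalIntegrable γ volume a₁ a₀)
    (hγinvint : IntervalIntegrable (fun a => (γ a)⁻¹) volume a₁ a₀)
    (z w : ℂ) (hzw : z ≠ (starRingEnd ℂ) w)
    (Az Bz Aw Bw : ℝ → ℂ)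
    (hz : IsSolution a₁ a₀ γ z Az Bz) (hw : IsSolution a₁ a₀ γ w Aw Bw) :
    ((starRingEnd ℂ) (Aw a₁) * Bz a₁ - (starRingEnd ℂ) (Bw a₁) * Az a₁) /
        ((Real.pi : ℂ) * (z - (starRingEnd ℂ) w)) -
      ((starRingEnd ℂ) (Aw a₀) * Bz a₀ - (starRingEnd ℂ) (Bw a₀) * Az a₀) /
        ((Real.pi : ℂ) * (z - (starRingEnd ℂ) w)) =
    (1 / (Real.pi : ℂ)) *
        (∫ a in a₁..a₀, (starRingEnd ℂ) (Aw a) * Az a * ((γ a : ℂ))⁻¹ * ((a : ℂ))⁻¹) +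
      (1 / (Real.pi : ℂ)) *
        (∫ a in a₁..a₀, (starRingEnd ℂ) (Bw a) * Bz a * (γ a : ℂ) * ((a : ℂ))⁻¹) :=
  stmt12_general a₁ a₀ ha₁ ha γ hγint hγinvint z w hzw Az Bz Aw Bw hz hw
end

section
/- For every 1 ≤ n ≤ 2g and each sign ε ∈ {+1, −1}: adj(e₀⁺ + ε·e₀⁻·Jₙ^{(4g)})·v = adj(e₀⁺ + ε·e₁⁻·Jₙ^{(4g)})·v, where adj denotes the adjugate matrix and v ∈ ℝ^{4g} is the first column of e₀⁻ (i.e., v has i-th entry C(g+1−i)). -/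
open Matrix

/-- The `4g × 4g` matrix `e₀⁺` with (1-based) `(i,j)` entry `C (i - j - g)`. -/
noncomputable def e0p (g : ℕ) (C : ℤ → ℝ) : Matrix (Fin (4*g)) (Fin (4*g)) ℝ :=
  fun i j => C (((i : ℕ) : ℤ) - ((j : ℕ) : ℤ) - (g : ℤ))

/-- The `4g × 4g` matrix `e₀⁻` with (1-based) `(i,j)` entry `C (g - i + j)`. -/
noncomputable def e0m (g : ℕ) (C : ℤ → ℝ) : Matrix (Fin (4*g)) (Fin (4*g)) ℝ :=
  fun i j => C ((g : ℤ) - ((i : ℕ) : ℤ) + ((j : ℕ) : ℤ))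

/-- The matrix `e₁⁻`, equal to `e₀⁻` except that its first column is zero. -/
noncomputable def e1m (g : ℕ) (C : ℤ → ℝ) : Matrix (Fin (4*g)) (Fin (4*g)) ℝ :=
  fun i j => if (j : ℕ) = 0 then 0 else C ((g : ℤ) - ((i : ℕ) : ℤ) + ((j : ℕ) : ℤ))

/-- The `4g × 4g` matrix `Jₙ^{(4g)}` with (1-based) `(i,j)` entry `1` if `i + j = n + 1`,
`0` otherwise. -/
def J4 (g : ℕ) (n : ℕ) : Matrix (Fin (4*g)) (Fin (4*g)) ℝ :=
  fun i j => if (i : ℕ) + (j : ℕ) + 1 = n then 1 else 0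

/-!
`e₀⁻` and `e₁⁻` differ only in the first column `v` of `e₀⁻`, and the first row of `Jₙ` is
the `n`-th unit row vector. Hence `e₀⁺ + ε e₀⁻ Jₙ` arises from `e₀⁺ + ε e₁⁻ Jₙ` by adding `ε v` to
its `n`-th column. By Cramer's rule the `k`-th entry of `adj(A) v` is `det` of `A` with its `k`-th
column replaced by `v`; after that replacement, adding a multiple of `v` to another column does
not change the determinant.
-/

namespace Matrix

variable {n R : Type*} [DecidableEq n] [CommRing R]

theorem add_vecMulVec_single_eq_updateCol (A : Matrix n n R) (u : n → R) (j : n) :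
    A + vecMulVec u (Pi.single j 1) = A.updateCol j fun i => A i j + u i := by
  ext i k
  by_cases hk : k = j
  · subst hk; simp [vecMulVec_apply]
  · simp [vecMulVec_apply, hk]

variable [Fintype n]

theorem cramer_updateCol_add_smul (A : Matrix n n R) (b : n → R) (j : n) (c : R) :
    cramer (A.updateCol j fun i => A i j + c * b i) b = cramer A b := by
  funext k
  rw [cramer_apply, cramer_apply]
  by_cases hkj : k = j
  · subst hkj
    rw [updateCol_idem]
  · have hcol : (A.updateCol j fun i => A i j + c * b i).updateCol k b =
        (A.updateCol k b).updateCol j fun i => A.updateCol k b i j + c • A.updateCol k b i k := by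
      rw [updateCol_comm _ (Ne.symm hkj)]
      simp [updateCol_ne (Ne.symm hkj)]
    rw [hcol, det_updateCol_add_smul_self _ (Ne.symm hkj)]

theorem adjugate_add_vecMulVec_single_mulVec (A : Matrix n n R) (b : n → R) (j : n) (c : R) :
    (A + vecMulVec (c • b) (Pi.single j 1)).adjugate *ᵥ b = A.adjugate *ᵥ b := by
  rw [add_vecMulVec_single_eq_updateCol, ← cramer_eq_adjugate_mulVec,
    ← cramer_eq_adjugate_mulVec]
  exact cramer_updateCol_add_smul A b j c

end Matrix

theorem e0m_mul_J4 {g n : ℕ} (C : ℤ → ℝ) (j : Fin (4*g)) (hj : (j : ℕ) + 1 = n) :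
    e0m g C * J4 g n =
      e1m g C * J4 g n +
        vecMulVec (fun i : Fin (4*g) => C ((g : ℤ) - ((i : ℕ) : ℤ))) (Pi.single j 1) := by
  have h0 : 0 < 4*g := j.pos
  ext i k
  rw [Matrix.add_apply, ← sub_eq_iff_eq_add', mul_apply, mul_apply, ← Finset.sum_sub_distrib,
    Finset.sum_eq_single (⟨0, h0⟩ : Fin (4*g))]
  · by_cases hk : k = j
    · subst hk; simp [e0m, e1m, J4, vecMulVec_apply, hj]
    · have hkn : ¬ (k : ℕ) + 1 = n := fun h => hk (Fin.ext (by omega))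
      simp [e0m, e1m, J4, vecMulVec_apply, hk, hkn]
  · intro l _ hl
    have hl0 : (l : ℕ) ≠ 0 := fun h => hl (Fin.ext h)
    simp [e0m, e1m, hl0]
  · simp

theorem stmt15_general (g : ℕ) (C : ℤ → ℝ) :
    ∀ n : ℕ, 1 ≤ n → n ≤ 2*g → ∀ ε : ℝ, ε = 1 ∨ ε = -1 →
      (Matrix.adjugate (e0p g C + ε • (e0m g C * J4 g n))).mulVec
          (fun i => C ((g : ℤ) - ((i : ℕ) : ℤ))) =
        (Matrix.adjugate (e0p g C + ε • (e1m g C * J4 g n))).mulVec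
          (fun i => C ((g : ℤ) - ((i : ℕ) : ℤ))) := by
  intro n hn1 hn2 ε _
  rw [e0m_mul_J4 C ⟨n - 1, by omega⟩ (Nat.sub_add_cancel hn1), smul_add, ← add_assoc,
    ← smul_vecMulVec]
  exact adjugate_add_vecMulVec_single_mulVec _ _ _ _

theorem stmt15 (g : ℕ) (hg : 1 ≤ g) (C : ℤ → ℝ)
    (hsupp : ∀ m : ℤ, g < m.natAbs → C m = 0) :
    ∀ n : ℕ, 1 ≤ n → n ≤ 2*g → ∀ ε : ℝ, ε = 1 ∨ ε = -1 →
      (Matrix.adjugate (e0p g C + ε • (e0m g C * J4 g n))).mulVec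
          (fun i => C ((g : ℤ) - ((i : ℕ) : ℤ))) =
        (Matrix.adjugate (e0p g C + ε • (e1m g C * J4 g n))).mulVec
          (fun i => C ((g : ℤ) - ((i : ℕ) : ℤ))) :=
  stmt15_general g C
end

section
/- For each sign ε ∈ {+1, −1}: det(e₀⁺ + ε·e₁⁻·J₁^{(4g)}) = det(e₀⁺) and det(e₀⁺ + ε·e₁⁻·J₂^{(4g)}) = det(e₀⁺), where det(e₀⁺) = C(−g)^{4g}; and for every n with 3 ≤ n ≤ 2g, det(e₀⁺ + ε·e₁⁻·Jₙ^{(4g)}) = det(e₀⁺ + ε·e₀⁻·J_{n−2}^{(4g)}). -/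
/-!
By the support condition `e₀⁺` is lower triangular with diagonal `C(-g)`. Right multiplication
by `Jₙ` moves the first `n` columns of a matrix, in reverse order, into columns `1, …, n` and
clears the rest. Because the first column of `e₁⁻` is zero, `e₁⁻J₁ = 0`, and `e₁⁻J₂` is
supported in the first column, strictly below the diagonal. For `n ≥ 3`, `L = e₀⁺ + ε e₁⁻Jₙ`
has first row `(C(-g), 0, …, 0)` and `R = e₀⁺ + ε e₀⁻Jₙ₋₂` has last column
`(0, …, 0, C(-g))ᵀ`. Deleting these leaves the same matrix, because a shift of both indices by
one turns `e₀⁺` into itself and `e₁⁻Jₙ` into `e₀⁻Jₙ₋₂`. Expanding along that row and that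
column gives `det L = det R`.
-/

open Matrix

section Expansion
variable {R : Type*} [CommRing R]

theorem det_eq_mul_det_submatrix_succ_of_row_zero {n : ℕ}
    (A : Matrix (Fin (n + 1)) (Fin (n + 1)) R) (h : ∀ j, j ≠ 0 → A 0 j = 0) :
    A.det = A 0 0 * (A.submatrix Fin.succ Fin.succ).det := by
  rw [det_succ_row_zero, Fintype.sum_eq_single 0 fun j hj => by rw [h j hj, mul_zero, zero_mul]]
  simp

theorem det_eq_mul_det_submatrix_castSucc_of_col_last {n : ℕ}
    (A : Matrix (Fin (n + 1)) (Fin (n + 1)) R) (h : ∀ i, i ≠ Fin.last n → A i (Fin.last n) = 0) :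
    A.det = A (Fin.last n) (Fin.last n) * (A.submatrix Fin.castSucc Fin.castSucc).det := by
  rw [det_succ_column _ (Fin.last n),
    Fintype.sum_eq_single (Fin.last n) fun i hi => by rw [h i hi, mul_zero, zero_mul]]
  simp [← two_mul]

theorem det_eq_det_of_shift {m : ℕ} (A B : Matrix (Fin m) (Fin m) R)
    (hA : ∀ i j : Fin m, (i : ℕ) = 0 → (j : ℕ) ≠ 0 → A i j = 0)
    (hB : ∀ i j : Fin m, (j : ℕ) + 1 = m → i ≠ j → B i j = 0)
    (hdiag : ∀ i j : Fin m, (i : ℕ) = 0 → (j : ℕ) + 1 = m → A i i = B j j)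
    (hshift : ∀ i j i' j' : Fin m, (i : ℕ) = i' + 1 → (j : ℕ) = j' + 1 → A i j = B i' j') :
    A.det = B.det := by
  obtain _ | n := m
  · simp
  rw [det_eq_mul_det_submatrix_succ_of_row_zero A fun j hj => hA 0 j rfl (Fin.val_ne_iff.mpr hj),
    det_eq_mul_det_submatrix_castSucc_of_col_last B fun i hi => hB i _ (by simp) hi,
    hdiag 0 (Fin.last n) rfl (by simp)]
  congr 2
  ext i j
  exact hshift _ _ _ _ (by simp) (by simp)

theorem det_eq_pow_of_lowerTriangular {m : ℕ} (A : Matrix (Fin m) (Fin m) R) (d : R)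
    (h : ∀ i j : Fin m, i < j → A i j = 0) (hd : ∀ i, A i i = d) : A.det = d ^ m := by
  rw [det_of_isLowerTriangular A h]
  simp [hd]

end Expansion

section Entries
variable {g : ℕ} {C : ℤ → ℝ}

theorem mul_J4_apply {n : ℕ} (hn : n ≤ 4 * g) (A : Matrix (Fin (4 * g)) (Fin (4 * g)) ℝ)
    (i j : Fin (4 * g)) :
    (A * J4 g n) i j = if h : (j : ℕ) < n then A i ⟨n - 1 - j, by omega⟩ else 0 := by
  simp only [mul_apply, J4, mul_ite, mul_one, mul_zero]
  split_ifs with h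
  · rw [Fintype.sum_eq_single ⟨n - 1 - j, by omega⟩ fun k hk =>
      if_neg fun hkj => hk (Fin.ext (by simp only; omega))]
    exact if_pos (by simp only; omega)
  · exact Finset.sum_eq_zero fun k _ => if_neg (by omega)

theorem e1m_mul_J4_apply {n : ℕ} (hn : n ≤ 4 * g) (i j : Fin (4 * g)) :
    (e1m g C * J4 g n) i j = if (j : ℕ) + 2 ≤ n then C (g - i + n - 1 - j) else 0 := by
  rw [mul_J4_apply hn]
  simp only [e1m]
  split_ifs <;> first | rfl | omega | (congr 1; omega)

theorem e0m_mul_J4_apply {n : ℕ} (hn : n ≤ 4 * g) (i j : Fin (4 * g)) :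
    (e0m g C * J4 g n) i j = if (j : ℕ) + 1 ≤ n then C (g - i + n - 1 - j) else 0 := by
  rw [mul_J4_apply hn]
  simp only [e0m]
  split_ifs <;> first | rfl | omega | (congr 1; omega)

theorem det_e0p (hsupp : ∀ m : ℤ, g < m.natAbs → C m = 0) :
    (e0p g C).det = C (-g) ^ (4 * g) := by
  refine det_eq_pow_of_lowerTriangular _ _ (fun i j hij => hsupp _ ?_) fun i => ?_
  · have : (i : ℕ) < j := hij
    omega
  · simp [e0p]

theorem e1m_mul_J4_one : e1m g C * J4 g 1 = 0 := by
  ext i j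
  refine (mul_apply ..).trans (Finset.sum_eq_zero fun k _ => ?_)
  simp only [e1m, J4]
  split_ifs <;> first | omega | simp

theorem det_e0p_add_smul_e1m_mul_J4_two (hg : 1 ≤ g) (hsupp : ∀ m : ℤ, g < m.natAbs → C m = 0)
    (ε : ℝ) : (e0p g C + ε • (e1m g C * J4 g 2)).det = C (-g) ^ (4 * g) := by
  refine det_eq_pow_of_lowerTriangular _ _ (fun i j hij => ?_) fun i => ?_ <;>
    simp only [Matrix.add_apply, Matrix.smul_apply, smul_eq_mul, e0p,
      e1m_mul_J4_apply (show 2 ≤ 4 * g by omega)]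
  · have : (i : ℕ) < j := hij
    split_ifs <;> simp (disch := omega) [hsupp]
  · split_ifs <;> simp (disch := omega) [hsupp]

theorem det_e0p_add_smul_e1m_mul_J4 (hsupp : ∀ m : ℤ, g < m.natAbs → C m = 0) (ε : ℝ)
    {n : ℕ} (hn3 : 3 ≤ n) (hn : n ≤ 2 * g) :
    (e0p g C + ε • (e1m g C * J4 g n)).det = (e0p g C + ε • (e0m g C * J4 g (n - 2))).det := by
  apply det_eq_det_of_shift <;>
    simp only [Matrix.add_apply, Matrix.smul_apply, smul_eq_mul, e0p,
      e1m_mul_J4_apply (show n ≤ 4 * g by omega), e0m_mul_J4_apply (show n - 2 ≤ 4 * g by omega)]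
  · intro i j hi hj
    split_ifs <;> simp (disch := omega) [hsupp]
  · intro i j hj hij
    have := Fin.val_ne_iff.mpr hij
    split_ifs <;> simp (disch := omega) [hsupp]
  · intro i j hi hj
    split_ifs <;> simp (disch := omega) [hsupp]
  · intro i j i' j' hi hj
    split_ifs <;> first | omega | (congr 3 <;> omega)

end Entries

theorem stmt16 (g : ℕ) (hg : 1 ≤ g) (C : ℤ → ℝ)
    (hsupp : ∀ m : ℤ, g < m.natAbs → C m = 0) :
    ∀ ε : ℝ, ε = 1 ∨ ε = -1 →
      (e0p g C + ε • (e1m g C * J4 g 1)).det = (e0p g C).det ∧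
      (e0p g C + ε • (e1m g C * J4 g 2)).det = (e0p g C).det ∧
      (e0p g C).det = C (-(g : ℤ)) ^ (4*g) ∧
      (∀ n : ℕ, 3 ≤ n → n ≤ 2*g →
        (e0p g C + ε • (e1m g C * J4 g n)).det =
          (e0p g C + ε • (e0m g C * J4 g (n-2))).det) := by
  intro ε _
  refine ⟨?_, ?_, det_e0p hsupp, fun n hn3 hn => det_e0p_add_smul_e1m_mul_J4 hsupp ε hn3 hn⟩
  · rw [e1m_mul_J4_one, smul_zero, add_zero]
  · rw [det_e0p_add_smul_e1m_mul_J4_two hg hsupp, det_e0p hsupp]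
end

section
/- For every 1 ≤ n ≤ 2g and each sign ε ∈ {+1, −1}: det(E₀⁺ + ε·Eₙ♯J) = C(−g)^{8g−2n}·det(Tₙ⁺)·det(Tₙ⁻), where Tₙ⁺ and Tₙ⁻ denote the top-left n×n submatrices of E₀⁺ + E₀⁻·Jₙ^{(8g)} and of E₀⁺ − E₀⁻·Jₙ^{(8g)}, respectively. In particular det(E₀⁺ + Eₙ♯J) = det(E₀⁺ − Eₙ♯J). -/
open Matrix

/-- The `8g × 8g` block-diagonal matrix `E₀⁺ = diag(e₀⁺, e₀⁺)`, where `e₀⁺` is the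
`4g × 4g` matrix with (1-based) `(i,j)` entry `C (i - j - g)`. -/
noncomputable def E0p (g : ℕ) (C : ℤ → ℝ) : Matrix (Fin (8*g)) (Fin (8*g)) ℝ :=
  fun i j => if ((i : ℕ) < 4*g ↔ (j : ℕ) < 4*g) then
    C (((i : ℕ) : ℤ) - ((j : ℕ) : ℤ) - (g : ℤ)) else 0

/-- The `8g × 8g` block-diagonal matrix `E₀⁻ = diag(e₀⁻, e₀⁻)`, where `e₀⁻` is the
`4g × 4g` matrix with (1-based) `(i,j)` entry `C (g - i + j)`. -/
noncomputable def E0m (g : ℕ) (C : ℤ → ℝ) : Matrix (Fin (8*g)) (Fin (8*g)) ℝ :=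
  fun i j => if ((i : ℕ) < 4*g ↔ (j : ℕ) < 4*g) then
    C ((g : ℤ) - ((i : ℕ) : ℤ) + ((j : ℕ) : ℤ)) else 0

/-- The `8g × 8g` matrix `Jₙ^{(8g)}` with (1-based) `(i,j)` entry `1` if `i + j = n + 1`,
`0` otherwise. -/
def J8 (g : ℕ) (n : ℕ) : Matrix (Fin (8*g)) (Fin (8*g)) ℝ :=
  fun i j => if (i : ℕ) + (j : ℕ) + 1 = n then 1 else 0

/-- The `8g × 8g` matrix `Eₙ♯J`, whose (1-based) `(i,j)` entry equals
`C (3g+1-i-(j-4g))` if `i ≤ 4g < j` and `2g-n+1 ≤ j-4g ≤ 2g`, equals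
`C (3g+1-(i-4g)-j)` if `j ≤ 4g < i` and `j ≤ n`, and equals `0` otherwise. -/
noncomputable def EnJ (g : ℕ) (C : ℤ → ℝ) (n : ℕ) : Matrix (Fin (8*g)) (Fin (8*g)) ℝ :=
  fun i j =>
    if (i : ℕ) < 4*g ∧ 4*g ≤ (j : ℕ) ∧ 6*g ≤ (j : ℕ) + n ∧ (j : ℕ) < 6*g then
      C (7*(g : ℤ) - 1 - ((i : ℕ) : ℤ) - ((j : ℕ) : ℤ))
    else if (j : ℕ) < 4*g ∧ 4*g ≤ (i : ℕ) ∧ (j : ℕ) < n then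
      C (7*(g : ℤ) - 1 - ((i : ℕ) : ℤ) - ((j : ℕ) : ℤ))
    else 0

/-! Since `C` vanishes off `[-g, g]`, `M = E₀⁺ ± Eₙ♯J` is lower triangular with diagonal `C (-g)`
except in the rows and columns indexed by `S = [0, n) ∪ [6g - n, 6g)`; ordering the indices as
`[4g, 6g - n)`, `S`, `[n, 4g)`, `[6g, 8g)` makes it block lower triangular with `S` the only
non-trivial block. Hence `det M = C (-g) ^ (8g - 2n) * det M|_S`, and `M|_S` has the shape
`[[A, ±B], [±B, A]]` with `A`, `B` the top-left `n × n` corners of `E₀⁺` and `E₀⁻ Jₙ`.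
Conjugating by `[[1, 1], [0, 1]]` gives `det(A + B) * det(A - B)`, independent of the sign. -/

open Finset

namespace Matrix

variable {m R α : Type*} [Fintype m] [DecidableEq m] [CommRing R] [LinearOrder α]

theorem BlockTriangular.det_eq_det_toSquareBlockProp_mul_prod {M : Matrix m m R} {b : m → α}
    (hM : M.BlockTriangular b) (p : m → Prop) [DecidablePred p]
    (hp : ∀ i j, p i → p j → b i = b j) (hb : ∀ i j, ¬p i → b i = b j → i = j) :
    M.det = (M.toSquareBlockProp p).det * ∏ i ∈ univ.filter (¬p ·), M i i := by
  have hsplit : univ.image b = (univ.filter p).image b ∪ (univ.filter (¬p ·)).image b := by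
    rw [← image_union, filter_union_filter_not_eq]
  have hdisj : Disjoint ((univ.filter p).image b) ((univ.filter (¬p ·)).image b) := by
    simp only [Finset.disjoint_left, mem_image, mem_filter, mem_univ, true_and]
    rintro _ ⟨i, hi, rfl⟩ ⟨j, hj, hji⟩
    exact hj (hb j i hj hji ▸ hi)
  rw [hM.det, hsplit, prod_union hdisj,
    prod_image fun i hi j _ hij => hb i j (mem_filter.1 hi).2 hij]
  congr 1
  · rcases (univ.filter p).eq_empty_or_nonempty with hempty | ⟨i₀, hi₀⟩
    · have : IsEmpty {i // p i} := ⟨fun i => filter_eq_empty_iff.1 hempty (mem_univ i.1) i.2⟩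
      rw [hempty, image_empty, prod_empty, det_isEmpty]
    · have hi₀ : p i₀ := (mem_filter.1 hi₀).2
      have himage : (univ.filter p).image b = {b i₀} := by
        refine eq_singleton_iff_unique_mem.2 ⟨mem_image_of_mem b (by simpa using hi₀), ?_⟩
        rintro _ h
        obtain ⟨j, hj, rfl⟩ := mem_image.1 h
        exact hp j i₀ (mem_filter.1 hj).2 hi₀
      rw [himage, prod_singleton, toSquareBlock_def]
      refine equiv_block_det M fun j => ⟨fun hj => hp j i₀ hj hi₀, fun hj => ?_⟩
      by_contra hnot
      exact hnot (hb j i₀ hnot hj ▸ hi₀)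
  · refine prod_congr rfl fun i hi => ?_
    let : Unique {j // b j = b i} :=
      ⟨⟨⟨i, rfl⟩⟩, fun j => Subtype.ext ((hb i j (mem_filter.1 hi).2 j.2.symm).symm)⟩
    rw [det_unique]
    rfl

theorem det_fromBlocks_self_swap {n : Type*} [Fintype n] [DecidableEq n] (A B : Matrix n n R) :
    (fromBlocks A B B A).det = (A + B).det * (A - B).det := by
  have hconj : fromBlocks 1 1 0 1 * fromBlocks A B B A * fromBlocks 1 (-1) 0 1 =
      fromBlocks (A + B) 0 B (A - B) := by
    simp only [fromBlocks_multiply, Matrix.one_mul, Matrix.mul_one, Matrix.zero_mul,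
      Matrix.mul_zero, Matrix.mul_neg, add_zero, zero_add]
    congr 1 <;> abel
  simpa [det_fromBlocks_zero₂₁, det_fromBlocks_zero₁₂] using congrArg det hconj

end Matrix

open OrderDual

variable {g n : ℕ} {C : ℤ → ℝ}

theorem bounds_of_E0p_apply_ne_zero (hsupp : ∀ m : ℤ, g < m.natAbs → C m = 0) {i j : Fin (8*g)}
    (h : E0p g C i j ≠ 0) : ((i : ℕ) < 4*g ↔ (j : ℕ) < 4*g) ∧ (j : ℕ) ≤ i ∧ (i : ℕ) ≤ j + 2*g := by
  unfold E0p at h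
  split_ifs at h with hij
  · refine ⟨hij, ?_⟩
    by_contra hc
    exact h (hsupp _ (by omega))
  · exact absurd rfl h

theorem bounds_of_EnJ_apply_ne_zero (hsupp : ∀ m : ℤ, g < m.natAbs → C m = 0) {i j : Fin (8*g)}
    (h : EnJ g C n i j ≠ 0) :
    ((i : ℕ) < 4*g ∧ 6*g ≤ (j : ℕ) + n ∧ (j : ℕ) < 6*g) ∨
      ((j : ℕ) < n ∧ 4*g ≤ (i : ℕ) ∧ 6*g ≤ (i : ℕ) + j + 1) := by
  unfold EnJ at h
  split_ifs at h with h₁ h₂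
  · omega
  · refine .inr ⟨h₂.2.2, h₂.2.1, ?_⟩
    by_contra hc
    exact h (hsupp _ (by omega))
  · exact absurd rfl h

theorem E0p_add_smul_EnJ_apply_self (ε : ℝ) (i : Fin (8*g)) :
    (E0p g C + ε • EnJ g C n) i i = C (-g) := by
  simp only [Matrix.add_apply, Matrix.smul_apply, smul_eq_mul, E0p, EnJ]
  split_ifs <;> first | omega | simp

abbrev IsCoupledIndex (g n : ℕ) (i : Fin (8*g)) : Prop :=
  (i : ℕ) < n ∨ 6*g ≤ (i : ℕ) + n ∧ (i : ℕ) < 6*g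

def triangularRank (g n : ℕ) (i : Fin (8*g)) : ℕ :=
  if (i : ℕ) < n then 2*g - n
  else if (i : ℕ) < 4*g then i + 2*g
  else if (i : ℕ) + n < 6*g then i - 4*g
  else if (i : ℕ) < 6*g then 2*g - n
  else i

theorem blockTriangular_E0p_add_smul_EnJ (hsupp : ∀ m : ℤ, g < m.natAbs → C m = 0)
    (hn : n ≤ 2*g) (ε : ℝ) :
    (E0p g C + ε • EnJ g C n).BlockTriangular (toDual ∘ triangularRank g n) := by
  intro i j hij
  change triangularRank g n i < triangularRank g n j at hij
  unfold triangularRank at hij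
  by_contra hne
  simp only [Matrix.add_apply, Matrix.smul_apply, smul_eq_mul] at hne
  by_cases h : E0p g C i j = 0
  · have hEnJ : EnJ g C n i j ≠ 0 := fun h' => hne (by simp [h, h'])
    have := bounds_of_EnJ_apply_ne_zero hsupp hEnJ
    split_ifs at hij <;> omega
  · have := bounds_of_E0p_apply_ne_zero hsupp h
    split_ifs at hij <;> omega

theorem triangularRank_eq_of_isCoupledIndex (hn : n ≤ 2*g) {i j : Fin (8*g)}
    (hi : IsCoupledIndex g n i) (hj : IsCoupledIndex g n j) :
    triangularRank g n i = triangularRank g n j := by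
  unfold triangularRank
  split_ifs <;> omega

theorem eq_of_triangularRank_eq (hn : n ≤ 2*g) {i j : Fin (8*g)} (hi : ¬IsCoupledIndex g n i)
    (h : triangularRank g n i = triangularRank g n j) : i = j := by
  unfold triangularRank at h
  ext
  split_ifs at h <;> omega

def coupledIndexEquiv (hn : n ≤ 2*g) :
    Fin n ⊕ Fin n ≃ {i : Fin (8*g) // IsCoupledIndex g n i} where
  toFun := Sum.elim (fun k => ⟨⟨k, by omega⟩, .inl k.2⟩) fun k =>
    ⟨⟨6*g - n + k, by omega⟩, .inr (show 6*g ≤ 6*g - n + k + n ∧ 6*g - n + k < 6*g by omega)⟩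
  invFun i := if h : (i : ℕ) < n then .inl ⟨i, h⟩ else .inr ⟨i - (6*g - n), by omega⟩
  left_inv := by
    rintro (k | k)
    · simp
    · simp only [Sum.elim_inr, add_tsub_cancel_left, Fin.eta, dite_eq_right_iff, reduceCtorEq,
        imp_false, not_lt]
      omega
  right_inv := by
    rintro ⟨i, hi⟩
    by_cases h : (i : ℕ) < n
    · simp [h]
    · simp only [h, dite_false, Sum.elim_inr]
      ext
      simp only
      omega

theorem card_filter_not_isCoupledIndex (hn : n ≤ 2*g) :
    #(univ.filter fun i => ¬IsCoupledIndex g n i) = 8*g - 2*n := by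
  rw [← Fintype.card_subtype, Fintype.card_subtype_compl,
    ← Fintype.card_congr (coupledIndexEquiv hn)]
  simp [two_mul]

def cornerToeplitz (g n : ℕ) (C : ℤ → ℝ) : Matrix (Fin n) (Fin n) ℝ :=
  of fun i j => C ((i : ℤ) - j - g)

def cornerHankel (g n : ℕ) (C : ℤ → ℝ) : Matrix (Fin n) (Fin n) ℝ :=
  of fun i j => C (g + n - 1 - i - j)

theorem E0p_submatrix_castLE (hn : n ≤ 4*g) (h : n ≤ 8*g) :
    (E0p g C).submatrix (Fin.castLE h) (Fin.castLE h) = cornerToeplitz g n C := by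
  ext i j
  simp only [submatrix_apply, E0p, cornerToeplitz, of_apply, Fin.val_castLE]
  rw [if_pos (by omega)]

theorem E0m_mul_J8_submatrix_castLE (hn : n ≤ 4*g) (h : n ≤ 8*g) :
    (E0m g C * J8 g n).submatrix (Fin.castLE h) (Fin.castLE h) = cornerHankel g n C := by
  ext i j
  simp only [submatrix_apply, mul_apply]
  rw [sum_eq_single (⟨n - 1 - j, by omega⟩ : Fin (8*g))]
  · simp only [E0m, J8, cornerHankel, of_apply, Fin.val_castLE]
    rw [if_pos (by omega), if_pos (by omega), mul_one]
    congr 1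
    omega
  · intro k _ hk
    have hkj : ¬(k : ℕ) + j + 1 = n := fun hkj => hk (Fin.ext (show (k : ℕ) = n - 1 - j by omega))
    simp only [J8, Fin.val_castLE, if_neg hkj, mul_zero]
  · simp

theorem toSquareBlockProp_submatrix_coupledIndexEquiv (hn : n ≤ 2*g) (ε : ℝ) :
    ((E0p g C + ε • EnJ g C n).toSquareBlockProp (IsCoupledIndex g n)).submatrix
      (coupledIndexEquiv hn) (coupledIndexEquiv hn) =
      fromBlocks (cornerToeplitz g n C) (ε • cornerHankel g n C) (ε • cornerHankel g n C)
        (cornerToeplitz g n C) := by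
  ext (a | a) (b | b) <;>
    simp only [toSquareBlockProp_def, coupledIndexEquiv, Equiv.coe_fn_mk, submatrix_apply,
      Sum.elim_inl, Sum.elim_inr, of_apply, Matrix.add_apply, Matrix.smul_apply, smul_eq_mul,
      mul_ite, mul_zero, E0p, EnJ, cornerToeplitz, cornerHankel, smul_of, Pi.smul_apply,
      fromBlocks_apply₁₁, fromBlocks_apply₁₂, fromBlocks_apply₂₁, fromBlocks_apply₂₂,
      Nat.cast_add, add_sub_add_left_eq_sub, Fin.is_lt, and_true]
  all_goals split_ifs <;> (try simp only [add_zero, zero_add]) <;>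
    first | omega | (congr 1; omega) | (congr 2; omega)

theorem det_E0p_add_smul_EnJ (hsupp : ∀ m : ℤ, g < m.natAbs → C m = 0) (hn : n ≤ 2*g) (ε : ℝ) :
    (E0p g C + ε • EnJ g C n).det = C (-g) ^ (8*g - 2*n) *
      ((cornerToeplitz g n C + ε • cornerHankel g n C).det *
        (cornerToeplitz g n C - ε • cornerHankel g n C).det) := by
  rw [(blockTriangular_E0p_add_smul_EnJ hsupp hn ε).det_eq_det_toSquareBlockProp_mul_prod
      (IsCoupledIndex g n) (fun _ _ => triangularRank_eq_of_isCoupledIndex hn)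
      (fun _ _ => eq_of_triangularRank_eq hn),
    ← det_submatrix_equiv_self (coupledIndexEquiv hn),
    toSquareBlockProp_submatrix_coupledIndexEquiv, det_fromBlocks_self_swap,
    prod_congr rfl fun i _ => E0p_add_smul_EnJ_apply_self ε i, prod_const,
    card_filter_not_isCoupledIndex hn, mul_comm]

theorem stmt17 (g : ℕ) (C : ℤ → ℝ)
    (hsupp : ∀ m : ℤ, g < m.natAbs → C m = 0) :
    ∀ n : ℕ, ∀ _hn1 : 1 ≤ n, ∀ hn2 : n ≤ 2*g,
      (∀ ε : ℝ, ε = 1 ∨ ε = -1 →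
        (E0p g C + ε • EnJ g C n).det =
          C (-(g : ℤ)) ^ (8*g - 2*n) *
            ((E0p g C + E0m g C * J8 g n).submatrix
              (Fin.castLE (by omega : n ≤ 8*g)) (Fin.castLE (by omega : n ≤ 8*g))).det *
            ((E0p g C - E0m g C * J8 g n).submatrix
              (Fin.castLE (by omega : n ≤ 8*g)) (Fin.castLE (by omega : n ≤ 8*g))).det) ∧
      (E0p g C + EnJ g C n).det = (E0p g C - EnJ g C n).det := by
  intro n _ hn
  have h4 : n ≤ 4*g := by omega
  simp only [submatrix_add, submatrix_sub, Pi.add_apply, Pi.sub_apply,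
    E0p_submatrix_castLE h4, E0m_mul_J8_submatrix_castLE h4]
  have hdet := det_E0p_add_smul_EnJ hsupp hn
  have hsign : ∀ ε : ℝ, ε = 1 ∨ ε = -1 → (E0p g C + ε • EnJ g C n).det =
      C (-g) ^ (8*g - 2*n) * (cornerToeplitz g n C + cornerHankel g n C).det *
        (cornerToeplitz g n C - cornerHankel g n C).det := by
    rintro ε (rfl | rfl)
    · rw [hdet, one_smul, mul_assoc]
    · rw [hdet, neg_one_smul, ← sub_eq_add_neg, sub_neg_eq_add, mul_assoc, mul_comm (det _)]
  refine ⟨hsign, ?_⟩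
  rw [sub_eq_add_neg, ← neg_one_smul ℝ (EnJ g C n), hsign _ (.inr rfl), ← hsign 1 (.inl rfl),
    one_smul]
end
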